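/- arXiv:2211.05602 — 4 statements merged into one kernel-verified Lean document; each statement's English description precedes it below -/
import Mathlib

section
/- Let R be a commutative ring. Every element f of 1 + tR[[t]] admits a unique representation as a convergent infinite product f = ∏_{i≥1} (1 - aᵢ tⁱ) with aᵢ ∈ R. Moreover, f ∈ 1 + t^N R[[t]] if and only if aᵢ = 0 for all i < N. -/
/-!
Multiplying a series with constant coefficient `1` by `1 - c X ^ k` leaves its coefficients below
degree `k` unchanged and subtracts `c` from the coefficient of `X ^ k`. Hence the coefficient of
`X ^ (N + 1)` in `f` determines `a (N + 1)` from `a 0, …, a N`: this gives existence by recursion,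
uniqueness by strong induction, and shows that `f ≡ 1 mod X ^ N` exactly when `a 1, …, a (N - 1)`
vanish.
-/

open Finset PowerSeries

section

variable {R : Type*} [CommRing R]

theorem PowerSeries.coeff_mul_one_sub_C_mul_X_pow_of_lt (Q : R⟦X⟧) (c : R) {m k : ℕ}
    (h : m < k) : coeff m (Q * (1 - C c * X ^ k)) = coeff m Q := by
  rw [mul_sub, mul_one, map_sub, mul_left_comm, coeff_C_mul, coeff_mul_X_pow', if_neg (by omega),
    mul_zero, sub_zero]

theorem PowerSeries.coeff_mul_one_sub_C_mul_X_pow_self (Q : R⟦X⟧) (c : R) (k : ℕ) :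
    coeff k (Q * (1 - C c * X ^ k)) = coeff k Q - c * constantCoeff Q := by
  rw [mul_sub, mul_one, map_sub, mul_left_comm, coeff_C_mul, coeff_mul_X_pow', if_pos le_rfl,
    Nat.sub_self, coeff_zero_eq_constantCoeff]

noncomputable def wittProd (a : ℕ → R) (N : ℕ) : R⟦X⟧ :=
  ∏ i ∈ range (N + 1), (1 - C (a i) * X ^ i)

-- `∏ i, (1 - a i * X ^ i)` converges `X`-adically to `f`, read off coefficientwise.
def IsWittProductRep (f : R⟦X⟧) (a : ℕ → R) : Prop :=
  a 0 = 0 ∧ ∀ N m : ℕ, m ≤ N → coeff m f = coeff m (wittProd a N)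

section

variable {a : ℕ → R}

theorem wittProd_succ (N : ℕ) :
    wittProd a (N + 1) = wittProd a N * (1 - C (a (N + 1)) * X ^ (N + 1)) :=
  prod_range_succ _ _

theorem wittProd_congr {b : ℕ → R} {N : ℕ} (h : ∀ i ≤ N, a i = b i) :
    wittProd a N = wittProd b N :=
  prod_congr rfl fun i hi => by rw [h i (Nat.lt_succ_iff.mp (mem_range.mp hi))]

theorem wittProd_eq_one (h0 : a 0 = 0) {N : ℕ} (h : ∀ i, 0 < i → i ≤ N → a i = 0) :
    wittProd a N = 1 := by
  refine prod_eq_one fun i hi => ?_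
  rcases i.eq_zero_or_pos with rfl | hi0
  · simp [h0]
  · simp [h i hi0 (Nat.lt_succ_iff.mp (mem_range.mp hi))]

theorem constantCoeff_wittProd (h0 : a 0 = 0) (N : ℕ) : constantCoeff (wittProd a N) = 1 := by
  simp [wittProd, map_prod, prod_range_succ', h0]

theorem coeff_wittProd_of_le {m N : ℕ} (h : m ≤ N) :
    coeff m (wittProd a N) = coeff m (wittProd a m) := by
  induction N, h using Nat.le_induction with
  | base => rfl
  | succ N hmN ih =>
    rw [wittProd_succ, coeff_mul_one_sub_C_mul_X_pow_of_lt _ _ (Nat.lt_succ_of_le hmN), ih]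

theorem coeff_succ_wittProd_succ (h0 : a 0 = 0) (N : ℕ) :
    coeff (N + 1) (wittProd a (N + 1)) = coeff (N + 1) (wittProd a N) - a (N + 1) := by
  rw [wittProd_succ, coeff_mul_one_sub_C_mul_X_pow_self, constantCoeff_wittProd h0, mul_one]

end

section

variable {f : R⟦X⟧} {a : ℕ → R}

theorem isWittProductRep_iff :
    IsWittProductRep f a ↔ a 0 = 0 ∧ ∀ n, coeff n f = coeff n (wittProd a n) := by
  refine and_congr_right fun _ => ⟨fun h n => h n n le_rfl, fun h N m hm => ?_⟩
  rw [h m, coeff_wittProd_of_le hm]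

theorem IsWittProductRep.apply_succ (h : IsWittProductRep f a) (N : ℕ) :
    a (N + 1) = coeff (N + 1) (wittProd a N) - coeff (N + 1) f := by
  rw [h.2 (N + 1) (N + 1) le_rfl, coeff_succ_wittProd_succ h.1, sub_sub_cancel]

theorem IsWittProductRep.unique {b : ℕ → R} (ha : IsWittProductRep f a)
    (hb : IsWittProductRep f b) : a = b := by
  funext n
  induction n using Nat.strong_induction_on with
  | _ n ih =>
    cases n with
    | zero => rw [ha.1, hb.1]
    | succ N =>
      rw [ha.apply_succ, hb.apply_succ, wittProd_congr fun i hi => ih i (Nat.lt_succ_of_le hi)]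

theorem IsWittProductRep.coeff_eq_zero_iff (h : IsWittProductRep f a) (N : ℕ) :
    (∀ m, 0 < m → m < N → coeff m f = 0) ↔ (∀ i, 0 < i → i < N → a i = 0) := by
  constructor
  · intro hf i
    induction i using Nat.strong_induction_on with
    | _ i ih =>
      intro hi hiN
      obtain ⟨k, rfl⟩ := Nat.exists_eq_add_one_of_ne_zero hi.ne'
      rw [h.apply_succ, hf (k + 1) hi hiN, sub_zero,
        wittProd_eq_one h.1 fun j hj hjk => ih j (by omega) hj (by omega), coeff_one,
        if_neg k.succ_ne_zero]
  · intro ha m hm hmN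
    rw [h.2 m m le_rfl, wittProd_eq_one h.1 fun i hi him => ha i hi (by omega), coeff_one,
      if_neg hm.ne']

end

-- Solving the recursion of `IsWittProductRep.apply_succ`.
noncomputable def wittCoeffs (f : R⟦X⟧) : ℕ → R
  | 0 => 0
  | N + 1 =>
    coeff (N + 1) (∏ i : Fin (N + 1), (1 - C (wittCoeffs f i) * X ^ (i : ℕ))) - coeff (N + 1) f
decreasing_by exact i.2

theorem wittCoeffs_succ (f : R⟦X⟧) (N : ℕ) :
    wittCoeffs f (N + 1) = coeff (N + 1) (wittProd (wittCoeffs f) N) - coeff (N + 1) f := by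
  rw [wittCoeffs, wittProd, ← Fin.prod_univ_eq_prod_range]

theorem isWittProductRep_wittCoeffs {f : R⟦X⟧} (hf : constantCoeff f = 1) :
    IsWittProductRep f (wittCoeffs f) := by
  have h0 : wittCoeffs f 0 = 0 := by rw [wittCoeffs]
  refine isWittProductRep_iff.mpr ⟨h0, fun n => ?_⟩
  cases n with
  | zero => rw [coeff_zero_eq_constantCoeff_apply, coeff_zero_eq_constantCoeff_apply,
      constantCoeff_wittProd h0, hf]
  | succ N => rw [coeff_succ_wittProd_succ h0, wittCoeffs_succ, sub_sub_cancel]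

end

/-- Every power series `f ∈ 1 + tR[[t]]` admits a unique representation as a
(t-adically convergent) infinite product `f = ∏_{i ≥ 1} (1 - aᵢ tⁱ)`: there is a unique
family `a : ℕ → R` (with the irrelevant index `a 0` normalized to `0`) such that for each `N`
the coefficients of `f` up to degree `N` agree with those of the finite partial product
`∏_{i ≤ N} (1 - aᵢ tⁱ)`.  Moreover `f ∈ 1 + t^N R[[t]]` iff `aᵢ = 0` for all `0 < i < N`. -/
theorem witt_infinite_product_representation {R : Type*} [CommRing R] (f : PowerSeries R)
    (hf : PowerSeries.constantCoeff f = 1) :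
    (∃! a : ℕ → R, a 0 = 0 ∧ ∀ N : ℕ, ∀ m : ℕ, m ≤ N →
        PowerSeries.coeff m f =
          PowerSeries.coeff m
            (∏ i ∈ Finset.range (N + 1), (1 - PowerSeries.C (a i) * PowerSeries.X ^ i))) ∧
    (∀ a : ℕ → R,
      (a 0 = 0 ∧ ∀ N : ℕ, ∀ m : ℕ, m ≤ N →
        PowerSeries.coeff m f =
          PowerSeries.coeff m
            (∏ i ∈ Finset.range (N + 1), (1 - PowerSeries.C (a i) * PowerSeries.X ^ i))) →
      ∀ N : ℕ,
        ((∀ m : ℕ, 0 < m → m < N → PowerSeries.coeff m f = 0) ↔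
          (∀ i : ℕ, 0 < i → i < N → a i = 0))) :=
  ⟨⟨wittCoeffs f, isWittProductRep_wittCoeffs hf,
      fun _ ha => IsWittProductRep.unique ha (isWittProductRep_wittCoeffs hf)⟩,
    fun _ ha => IsWittProductRep.coeff_eq_zero_iff ha⟩
end

section
/- Let R be a commutative ring and M a nilpotent square matrix over R. Then every coefficient of det(1 - tM) other than the constant coefficient 1 is nilpotent in R. Consequently det(1 - tM) is a unit in the polynomial ring R[t]. -/
/-! `1 - tM` is `1` minus a nilpotent matrix over `R[t]`, hence invertible, so its determinant is
a unit of `R[t]`; the units of `R[t]` are exactly the polynomials with unit constant term and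
nilpotent higher coefficients. -/

open Polynomial

theorem Matrix.isUnit_det_one_sub_of_isNilpotent {n S : Type*} [Fintype n] [DecidableEq n]
    [CommRing S] {N : Matrix n n S} (hN : IsNilpotent N) : IsUnit (1 - N).det :=
  (Matrix.isUnit_iff_isUnit_det _).mp hN.isUnit_one_sub

theorem Matrix.isNilpotent_X_smul_map_C {n R : Type*} [Fintype n] [DecidableEq n] [CommRing R]
    {M : Matrix n n R} (hM : IsNilpotent M) : IsNilpotent ((X : R[X]) • M.map C) :=
  (hM.map C.mapMatrix).smul _

/-- if `M` is a nilpotent square matrix over a commutative ring `R`, then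
every coefficient of `det(1 - tM)` other than the constant coefficient `1` is nilpotent
in `R`; consequently `det(1 - tM)` is a unit of the polynomial ring `R[t]`. -/
theorem charpoly_nilpotent_unit {R : Type*} [CommRing R] {m : ℕ}
    (M : Matrix (Fin m) (Fin m) R) (hM : IsNilpotent M) :
    (∀ i : ℕ, i ≠ 0 →
      IsNilpotent
        (Polynomial.coeff
          (((1 : Matrix (Fin m) (Fin m) (Polynomial R)) -
              (Polynomial.X : Polynomial R) • M.map Polynomial.C).det) i)) ∧
    IsUnit (((1 : Matrix (Fin m) (Fin m) (Polynomial R)) -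
        (Polynomial.X : Polynomial R) • M.map Polynomial.C).det) := by
  have hUnit := Matrix.isUnit_det_one_sub_of_isNilpotent (Matrix.isNilpotent_X_smul_map_C hM)
  exact ⟨(isUnit_iff_coeff_isUnit_isNilpotent.mp hUnit).2, hUnit⟩
end

section
/- Let R be a commutative ring, M a square matrix over R. Then the negative logarithmic derivative of the characteristic power series computes traces of powers: -t · d/dt log det(1 - tM) = ∑_{n≥1} tr(M^n) t^n in R[[t]], equivalently t·(d/dt det(1 - tM)) = -det(1 - tM) · ∑_{n≥1} tr(M^n) t^n. -/
/-!
By Jacobi's formula, `f = det (1 - tM)` has derivative `-tr (adj (1 - tM) · M)`. Over `R⟦t⟧` the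
geometric series `G = ∑ₖ tᵏ Mᵏ` is a right inverse of `1 - tM`, so
`adj (1 - tM) = adj (1 - tM) (1 - tM) G = f · G`, whence `f' = -f · ∑ₖ tr (Mᵏ⁺¹) tᵏ`.
-/

open Polynomial
open scoped PowerSeries

namespace Matrix

variable {R n : Type*} [CommRing R] [DecidableEq n]

theorem map_one_sub_X_smul_map_C (M : Matrix n n R) :
    (1 - (X : R[X]) • M.map C).map (coeToPowerSeries.ringHom (R := R)) =
      1 - (PowerSeries.X : R⟦X⟧) • M.map PowerSeries.C := by
  ext i j : 2
  by_cases h : i = j <;> simp [h, -X_mul_C]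

variable [Fintype n]

theorem adjugate_mul_apply_self (A B : Matrix n n R) (j : n) :
    (A.adjugate * B) j j = (A.updateCol j fun i => B i j).det := by
  rw [← cramer_apply, cramer_eq_adjugate_mulVec]
  rfl

theorem derivative_det_eq_sum_det_updateCol (A : Matrix n n R[X]) :
    derivative A.det = ∑ j, (A.updateCol j fun i => derivative (A i j)).det := by
  simp only [det_apply', map_sum]
  rw [Finset.sum_comm]
  refine Finset.sum_congr rfl fun σ _ => ?_
  rw [derivative_mul, derivative_intCast, zero_mul, zero_add, derivative_prod_finset,
    Finset.mul_sum]
  refine Finset.sum_congr rfl fun j _ => ?_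
  rw [← Finset.mul_prod_erase _ _ (Finset.mem_univ j), updateCol_self, mul_comm (derivative _)]
  congr 2
  exact Finset.prod_congr rfl fun i hi => (updateCol_ne (Finset.ne_of_mem_erase hi)).symm

theorem derivative_det (A : Matrix n n R[X]) :
    derivative A.det = trace (A.adjugate * A.map derivative) := by
  simp only [trace, diag, adjugate_mul_apply_self, derivative_det_eq_sum_det_updateCol, map_apply]

variable (M : Matrix n n R)

theorem derivative_charpolyRev :
    derivative M.charpolyRev = -trace ((1 - (X : R[X]) • M.map C).adjugate * M.map C) := by
  have h : (1 - (X : R[X]) • M.map C).map derivative = -M.map C := by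
    ext i j
    simp [one_apply, apply_ite derivative]
  rw [charpolyRev, derivative_det, h, mul_neg, trace_neg]

noncomputable def geomSeries : Matrix n n R⟦X⟧ :=
  of fun i j => PowerSeries.mk fun k => (M ^ k) i j

theorem map_C_mul_geomSeries :
    M.map PowerSeries.C * geomSeries M =
      of fun i j => PowerSeries.mk fun k => (M ^ (k + 1)) i j := by
  ext i j k
  simp [mul_apply, geomSeries, PowerSeries.coeff_C_mul, pow_succ']

theorem one_sub_X_smul_mul_geomSeries :
    (1 - (PowerSeries.X : R⟦X⟧) • M.map PowerSeries.C) * geomSeries M = 1 := by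
  rw [sub_mul, one_mul, smul_mul, map_C_mul_geomSeries]
  ext i j (_ | k)
  · simp [geomSeries, one_apply, apply_ite (PowerSeries.coeff 0)]
  · simp [geomSeries, one_apply, PowerSeries.coeff_succ_X_mul,
      apply_ite (PowerSeries.coeff (k + 1))]

theorem adjugate_one_sub_X_smul :
    (1 - (PowerSeries.X : R⟦X⟧) • M.map PowerSeries.C).adjugate =
      (1 - (PowerSeries.X : R⟦X⟧) • M.map PowerSeries.C).det • geomSeries M := by
  set A := 1 - (PowerSeries.X : R⟦X⟧) • M.map PowerSeries.C
  calc A.adjugate = A.adjugate * A * geomSeries M := by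
        rw [mul_assoc, one_sub_X_smul_mul_geomSeries, mul_one]
    _ = A.det • geomSeries M := by rw [adjugate_mul, smul_mul, one_mul]

theorem trace_geomSeries_mul_map_C :
    trace (geomSeries M * M.map PowerSeries.C) =
      PowerSeries.mk fun k => trace (M ^ (k + 1)) := by
  rw [trace_mul_comm, map_C_mul_geomSeries]
  ext k
  simp [trace]

theorem coe_charpolyRev :
    (M.charpolyRev : R⟦X⟧) = (1 - (PowerSeries.X : R⟦X⟧) • M.map PowerSeries.C).det := by
  rw [charpolyRev, ← coeToPowerSeries.ringHom_apply, RingHom.map_det, RingHom.mapMatrix_apply,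
    map_one_sub_X_smul_map_C]

theorem derivative_coe_charpolyRev :
    PowerSeries.derivative R (M.charpolyRev : R⟦X⟧) =
      -(M.charpolyRev * PowerSeries.mk fun k => trace (M ^ (k + 1))) := by
  have hC : (M.map C).map (coeToPowerSeries.ringHom (R := R)) = M.map PowerSeries.C := by
    ext
    simp
  rw [PowerSeries.derivative_coe, derivative_charpolyRev, coe_neg,
    ← coeToPowerSeries.ringHom_apply, AddMonoidHom.map_trace, ← RingHom.mapMatrix_apply, map_mul,
    RingHom.map_adjugate, RingHom.mapMatrix_apply, RingHom.mapMatrix_apply,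
    map_one_sub_X_smul_map_C, hC, adjugate_one_sub_X_smul, smul_mul, trace_smul,
    trace_geomSeries_mul_map_C, coe_charpolyRev, smul_eq_mul]

end Matrix

/-- the negative logarithmic derivative of the characteristic power series
`f = det(1 - tM)` computes traces of powers: `-t·f'/f = ∑_{n≥1} tr(Mⁿ)tⁿ`, stated without
division as `t·f' + f·(∑_{n≥1} tr(Mⁿ)tⁿ) = 0` in `R[[t]]`. -/
theorem charpoly_log_derivative_trace {R : Type*} [CommRing R] {m : ℕ}
    (M : Matrix (Fin m) (Fin m) R) :
    (PowerSeries.X : PowerSeries R) *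
        PowerSeries.derivative R
          (Polynomial.coeToPowerSeries.ringHom
            (((1 : Matrix (Fin m) (Fin m) (Polynomial R)) -
                (Polynomial.X : Polynomial R) • M.map Polynomial.C).det)) +
      (Polynomial.coeToPowerSeries.ringHom
          (((1 : Matrix (Fin m) (Fin m) (Polynomial R)) -
              (Polynomial.X : Polynomial R) • M.map Polynomial.C).det)) *
        PowerSeries.mk (fun n => if n = 0 then 0 else Matrix.trace (M ^ n)) = 0 := by
  have hshift : PowerSeries.mk (fun n => if n = 0 then 0 else Matrix.trace (M ^ n)) =
      PowerSeries.X * PowerSeries.mk fun k => Matrix.trace (M ^ (k + 1)) := by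
    ext (_ | k) <;> simp [PowerSeries.coeff_succ_X_mul]
  change PowerSeries.X * PowerSeries.derivative R (coeToPowerSeries.ringHom M.charpolyRev) +
    coeToPowerSeries.ringHom M.charpolyRev * _ = 0
  rw [coeToPowerSeries.ringHom_apply, Matrix.derivative_coe_charpolyRev, hshift]
  ring
end

section
/- Let R be a commutative Z[1/l]-algebra for an integer l ≥ 2, and let A be an abelian group equipped with a continuous W(R)-module structure (i.e. every element of A is annihilated by the ideal 1 + t^N R[[t]] for some N). Then multiplication by the integer l (acting via the unit map Z → W(R)) is invertible on A. -/
open PowerSeries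

/-- `f` lies in `1 + t^N R[[t]]`: constant coefficient `1` and vanishing coefficients in
degrees `0 < m < N`.  These subsets are the ideals of the big Witt ring `W(R)` defining
its natural topology. -/
def CongOne {R : Type*} [CommRing R] (N : ℕ) (f : PowerSeries R) : Prop :=
  PowerSeries.constantCoeff f = 1 ∧ ∀ m : ℕ, 0 < m → m < N → PowerSeries.coeff m f = 0

/-!
`ℓ` is already a unit of `W(R)`, so it acts invertibly on every `W(R)`-module. Witt addition
being multiplication of power series, `ℓ • u` corresponds to `g ^ ℓ` when `u` corresponds to
`g`, and `1` corresponds to `1 - t`; so an `ℓ`-th root of `1 - t` with constant coefficient `1`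
is an inverse of `ℓ`. Such a root exists by Hensel's lemma in the `t`-adically complete ring
`R⟦t⟧`, since the derivative `ℓ` of `T ^ ℓ - (1 - t)` at `T = 1` is a unit.
-/

theorem PowerSeries.exists_pow_eq_of_constantCoeff_eq_one {R : Type*} [CommRing R] {n : ℕ}
    (hn : IsUnit (n : R)) {f : R⟦X⟧} (hf : constantCoeff f = 1) :
    ∃ g : R⟦X⟧, constantCoeff g = 1 ∧ g ^ n = f := by
  rcases Nat.eq_zero_or_pos n with rfl | hpos
  · have : Subsingleton R := subsingleton_of_zero_eq_one (isUnit_zero_iff.mp (by simpa using hn))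
    exact ⟨1, Subsingleton.elim _ _, Subsingleton.elim _ _⟩
  have hmonic : (Polynomial.X ^ n - Polynomial.C f).Monic :=
    Polynomial.monic_X_pow_sub_C f hpos.ne'
  have hroot : (Polynomial.X ^ n - Polynomial.C f).eval 1 ∈ Ideal.span {(X : R⟦X⟧)} := by
    rw [Ideal.mem_span_singleton, X_dvd_iff]
    simp [hf]
  have hsimple : IsUnit (Ideal.Quotient.mk (Ideal.span {(X : R⟦X⟧)})
      ((Polynomial.X ^ n - Polynomial.C f).derivative.eval 1)) := by
    simpa [Polynomial.derivative_X_pow] using hn.map (algebraMap R (R⟦X⟧ ⧸ Ideal.span {X}))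
  obtain ⟨g, hg, hg_sub_one⟩ := HenselianRing.is_henselian _ hmonic 1 hroot hsimple
  refine ⟨g, ?_, by simpa [sub_eq_zero] using hg.eq_zero⟩
  rwa [Ideal.mem_span_singleton, X_dvd_iff, map_sub, map_one, sub_eq_zero] at hg_sub_one

theorem map_nsmul_of_map_add_eq_mul {W M : Type*} [AddMonoid W] [Monoid M] {φ : W → M}
    (hadd : ∀ v w, φ (v + w) = φ v * φ w) (h0 : IsUnit (φ 0)) (n : ℕ) (w : W) :
    φ (n • w) = φ w ^ n := by
  induction n with
  | zero =>
    have hidem : IsIdempotentElem (φ 0) := by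
      simpa only [IsIdempotentElem, add_zero] using (hadd 0 0).symm
    simpa using (IsIdempotentElem.iff_eq_one_of_isUnit h0).mp hidem
  | succ n ih => rw [succ_nsmul, hadd, ih, pow_succ]

theorem isUnit_natCast_of_equiv_constantCoeff_eq_one {R W : Type*} [CommRing R] [CommRing W]
    (e : W ≃ {f : R⟦X⟧ // constantCoeff f = 1})
    (hadd : ∀ v w : W, (e (v + w)).1 = (e v).1 * (e w).1) (hone : (e 1).1 = 1 - X)
    {n : ℕ} (hn : IsUnit (n : R)) : IsUnit (n : W) := by
  obtain ⟨g, hg, hgn⟩ := exists_pow_eq_of_constantCoeff_eq_one hn (f := 1 - X) (by simp)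
  have he0 : IsUnit (e 0).1 := isUnit_iff_constantCoeff.mpr (by rw [(e 0).2]; exact isUnit_one)
  refine .of_mul_eq_one (e.symm ⟨g, hg⟩) (e.injective (Subtype.ext ?_))
  rw [← nsmul_eq_mul, map_nsmul_of_map_add_eq_mul (φ := fun w => (e w).1) hadd he0, Equiv.apply_symm_apply, hgn, hone]

/-- let `R` be a commutative `ℤ[1/l]`-algebra (`l ≥ 2` invertible in `R`), and
let `W` be the ring of big Witt vectors of `R`: a commutative ring identified with
`1 + tR[[t]]` in such a way that Witt addition is multiplication of power series, the unit
is `1 - t`, Witt multiplication satisfies `(1-at)·(1-bt) = 1-abt`, and the subsets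
`1 + t^N R[[t]]` are ideals.  If `A` is an abelian group with a continuous `W`-module
structure (every element of `A` is annihilated by the ideal `1 + t^N R[[t]]` for some `N`),
then multiplication by the integer `l` (acting via the unit map `ℤ → W`) is invertible
on `A`. -/
theorem mul_int_invertible_on_continuous_witt_module (R : Type*) [CommRing R]
    (l : ℕ) (hR : IsUnit (l : R))
    (W : Type*) [CommRing W]
    (e : W ≃ {f : PowerSeries R // PowerSeries.constantCoeff f = 1})
    (hadd : ∀ v w : W, (e (v + w)).1 = (e v).1 * (e w).1)
    (hone : (e 1).1 = 1 - PowerSeries.X)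
    (A : Type*) [AddCommGroup A] [Module W A] :
    Function.Bijective (fun a : A => (l : W) • a) :=
  (isUnit_natCast_of_equiv_constantCoeff_eq_one e hadd hone hR).smul_bijective
end
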